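/- Let N ≥ 1, p ∈ (0, 1), and q := 2√(p(1−p)). For k ∈ {0,1}^N let S_k := p^{(N − h(k))/2} (1 − p)^{h(k)/2} · ⊗_{i=1}^N σz^{k_i} be the dephasing Kraus operators on (ℂ²)^{⊗N} (h = Hamming weight), set M := Σ_{l,k} S_l ⟨l| S_x |k⟩ S_k and M₂ := Σ_{l,k} S_l ⟨l| S_x² |k⟩ S_k. For any unit vector ψ ∈ (ℂ²)^{⊗N} put v := ⟨ψ, S_z² ψ⟩ − ⟨ψ, S_z ψ⟩², Ξ := ⟨ψ, S_z M ψ⟩ − ⟨ψ, S_z ψ⟩⟨ψ, M ψ⟩ and Ω := ⟨ψ, M₂ ψ⟩ − ⟨ψ, M ψ⟩². Then Ξ = q v and Ω = N(1 − q²) + q² v, and if v > 0 the minimum over α ∈ ℝ of 4( v + 2αΞ + α²Ω ) equals 4 N v (1 − q²) / ( N(1 − q²) + q² v ). -/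

import Mathlib

open Matrix

/-- The Pauli matrices `σx` and `σz`. -/
def pauliX : Matrix (Fin 2) (Fin 2) ℂ := !![0, 1; 1, 0]
def pauliZ : Matrix (Fin 2) (Fin 2) ℂ := !![1, 0; 0, -1]

/-- `σ_A^{(i)}` : the one-qubit operator `A` acting on the `i`-th tensor factor of
`(ℂ²)^{⊗N}` and the identity elsewhere, written as a matrix indexed by bitstrings. -/
def pauliAt (N : ℕ) (i : ℕ) (A : Matrix (Fin 2) (Fin 2) ℂ) :
    Matrix (Fin N → Fin 2) (Fin N → Fin 2) ℂ :=
  Matrix.of fun x y =>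
    ∏ j : Fin N, if (j : ℕ) = i then A (x j) (y j) else (if x j = y j then 1 else 0)

/-- The `N`-fold tensor product of one-qubit operators, as a matrix indexed by
bitstrings. -/
def kronN (N : ℕ) (A : Fin N → Matrix (Fin 2) (Fin 2) ℂ) :
    Matrix (Fin N → Fin 2) (Fin N → Fin 2) ℂ :=
  Matrix.of fun x y => ∏ i : Fin N, A i (x i) (y i)

/-- The Hamming weight of a bitstring. -/
def hamWt (N : ℕ) (k : Fin N → Fin 2) : ℕ := ∑ i : Fin N, (k i : ℕ)

/-- The dephasing Kraus operator
`S_k = p^{(N-h(k))/2} (1-p)^{h(k)/2} ⊗_{i=1}^N σz^{k_i}`. -/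
noncomputable def krausOp (N : ℕ) (p : ℝ) (k : Fin N → Fin 2) :
    Matrix (Fin N → Fin 2) (Fin N → Fin 2) ℂ :=
  ((Real.sqrt (p ^ (N - hamWt N k)) * Real.sqrt ((1 - p) ^ hamWt N k) : ℝ) : ℂ) •
    kronN N (fun i => if k i = 1 then pauliZ else 1)


/-!
The Kraus operators factor as tensor products of the one-qubit operators `√p·1` and
`√(1-p)·σz`, so the map `A ↦ Σ_{l,k} A_{lk} S_l S_k` sends a tensor product `⊗ Aᵢ` to `⊗ Φ(Aᵢ)`,
where `Φ` is its one-qubit version. One computes `Φ(1) = 1` and `Φ(σx) = q σz`, hence `M = q S_z`.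
On `σx^{(m)} σx^{(m')}` the map is multiplicative for `m ≠ m'` (one factor at each site is `1`),
but on the diagonal it gives `Φ(σx²) = 1` instead of `Φ(σx)² = q²`; summing,
`M₂ = N(1 - q²) + q² S_z²`. Then `Ξ = q v`, `Ω = N(1 - q²) + q² v`, and the bound is the
minimum `c - b²/a` of the real quadratic `c + 2bα + aα²`.
-/

lemma pauliX_mul_self : pauliX * pauliX = 1 := by
  rw [pauliX, mul_fin_two, one_fin_two]; norm_num

lemma pauliZ_mul_self : pauliZ * pauliZ = 1 := by
  rw [pauliZ, mul_fin_two, one_fin_two]; norm_num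

section TensorPower

variable {N : ℕ}

lemma kronN_mul (A B : Fin N → Matrix (Fin 2) (Fin 2) ℂ) :
    kronN N A * kronN N B = kronN N (fun i => A i * B i) := by
  ext x y
  simp only [kronN, mul_apply, of_apply, Fintype.prod_sum, Finset.prod_mul_distrib]

lemma kronN_one : kronN N (fun _ => 1) = 1 := by
  ext x y
  simp only [kronN, of_apply, one_apply, Fintype.prod_boole]
  simp [funext_iff]

lemma kronN_smul (c : Fin N → ℂ) (A : Fin N → Matrix (Fin 2) (Fin 2) ℂ) :
    kronN N (fun i => c i • A i) = (∏ i, c i) • kronN N A := by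
  ext x y
  simp only [kronN, of_apply, Matrix.smul_apply, smul_eq_mul, Finset.prod_mul_distrib]

lemma pauliAt_eq_kronN (m : Fin N) (A : Matrix (Fin 2) (Fin 2) ℂ) :
    pauliAt N m A = kronN N (fun j => if j = m then A else 1) := by
  ext x y
  simp only [pauliAt, kronN, of_apply, Fin.val_inj]
  exact Finset.prod_congr rfl fun j _ => by split_ifs <;> simp_all [one_apply]

lemma pauliAt_mul_self {A : Matrix (Fin 2) (Fin 2) ℂ} (hA : A * A = 1) (m : Fin N) :
    pauliAt N m A * pauliAt N m A = 1 := by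
  rw [pauliAt_eq_kronN, kronN_mul, ← kronN_one]
  congr 1
  funext j
  split_ifs <;> simp [hA]

end TensorPower

section KrausSandwich

variable {ι n : Type*} [Fintype ι] [Fintype n]

def krausSandwich (K : ι → Matrix n n ℂ) : Matrix ι ι ℂ →ₗ[ℂ] Matrix n n ℂ where
  toFun A := ∑ l, ∑ k, A l k • (K l * K k)
  map_add' A B := by simp only [Matrix.add_apply, add_smul, Finset.sum_add_distrib]
  map_smul' c A := by
    simp only [Matrix.smul_apply, smul_eq_mul, mul_smul, Finset.smul_sum, RingHom.id_apply]

lemma krausSandwich_apply (K : ι → Matrix n n ℂ) (A : Matrix ι ι ℂ) :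
    krausSandwich K A = ∑ l, ∑ k, A l k • (K l * K k) := rfl

end KrausSandwich

lemma krausSandwich_kronN {N : ℕ} (K : Fin 2 → Matrix (Fin 2) (Fin 2) ℂ)
    (G : Fin N → Matrix (Fin 2) (Fin 2) ℂ) :
    krausSandwich (fun l : Fin N → Fin 2 => kronN N (fun i => K (l i))) (kronN N G)
      = kronN N (fun i => krausSandwich K (G i)) := by
  ext x y
  simp only [krausSandwich_apply, kronN_mul, Matrix.sum_apply, Matrix.smul_apply, smul_eq_mul]
  simp only [kronN, of_apply, ← Finset.prod_mul_distrib, Matrix.sum_apply, Matrix.smul_apply,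
    smul_eq_mul]
  rw [Fintype.prod_sum]
  refine Finset.sum_congr rfl fun l _ => ?_
  rw [Fintype.prod_sum]

open scoped Finset

lemma hamWt_eq_card {N : ℕ} (k : Fin N → Fin 2) : hamWt N k = #{i | k i = 1} := by
  rw [hamWt, Finset.card_filter]
  refine Finset.sum_congr rfl fun i _ => ?_
  generalize k i = b
  fin_cases b <;> rfl

lemma prod_ite_eq_pow_hamWt {M : Type*} [CommMonoid M] {N : ℕ} (k : Fin N → Fin 2) (a b : M) :
    ∏ i, (if k i = 1 then b else a) = a ^ (N - hamWt N k) * b ^ hamWt N k := by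
  have hcompl : N - hamWt N k = #{i | ¬k i = 1} := by
    have h := Finset.card_filter_add_card_filter_not (s := Finset.univ) (fun i => k i = 1)
    rw [Finset.card_univ, Fintype.card_fin] at h
    rw [hamWt_eq_card]
    omega
  rw [Finset.prod_ite, Finset.prod_const, Finset.prod_const, hcompl, hamWt_eq_card, mul_comm]

lemma Real.sqrt_pow_of_nonneg {x : ℝ} (hx : 0 ≤ x) (n : ℕ) : √(x ^ n) = √x ^ n := by
  rw [← Real.sqrt_sq (pow_nonneg (Real.sqrt_nonneg x) n), ← pow_mul, pow_mul', Real.sq_sqrt hx]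

noncomputable def dephasingKraus (p : ℝ) (b : Fin 2) : Matrix (Fin 2) (Fin 2) ℂ :=
  if b = 1 then ((√(1 - p) : ℝ) : ℂ) • pauliZ else ((√p : ℝ) : ℂ) • 1

section Dephasing

variable {p : ℝ} {N : ℕ}

lemma krausOp_eq_kronN (hp0 : 0 ≤ p) (hp1 : p ≤ 1) (k : Fin N → Fin 2) :
    krausOp N p k = kronN N (fun i => dephasingKraus p (k i)) := by
  have hsplit : ∀ b : Fin 2, dephasingKraus p b
      = ((if b = 1 then √(1 - p) else √p : ℝ) : ℂ) • (if b = 1 then pauliZ else 1) := by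
    intro b; unfold dephasingKraus; split_ifs <;> rfl
  simp only [hsplit, kronN_smul, krausOp, ← Complex.ofReal_prod, prod_ite_eq_pow_hamWt,
    Real.sqrt_pow_of_nonneg hp0, Real.sqrt_pow_of_nonneg (sub_nonneg.2 hp1)]

lemma krausSandwich_dephasingKraus_one (hp0 : 0 ≤ p) (hp1 : p ≤ 1) :
    krausSandwich (dephasingKraus p) 1 = 1 := by
  simp only [krausSandwich_apply, Fin.sum_univ_two, dephasingKraus, one_apply]
  simp [smul_smul, pauliZ_mul_self, Real.mul_self_sqrt hp0,
    Real.mul_self_sqrt (sub_nonneg.2 hp1), ← add_smul]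

lemma krausSandwich_dephasingKraus_pauliX (hp0 : 0 ≤ p) :
    krausSandwich (dephasingKraus p) pauliX = ((2 * √(p * (1 - p)) : ℝ) : ℂ) • pauliZ := by
  simp only [krausSandwich_apply, Fin.sum_univ_two, dephasingKraus]
  simp only [pauliX, of_apply, cons_val', cons_val_zero, cons_val_one, cons_val_fin_one,
    zero_ne_one, if_true, if_false, Algebra.mul_smul_comm, Algebra.smul_mul_assoc, mul_one, one_mul,
    smul_smul, zero_mul, zero_smul, zero_add, add_zero, Complex.ofReal_mul, Complex.ofReal_ofNat]
  rw [← add_smul, Real.sqrt_mul hp0]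
  push_cast
  ring_nf

lemma krausSandwich_krausOp_kronN (hp0 : 0 ≤ p) (hp1 : p ≤ 1)
    (G : Fin N → Matrix (Fin 2) (Fin 2) ℂ) :
    krausSandwich (krausOp N p) (kronN N G)
      = kronN N (fun i => krausSandwich (dephasingKraus p) (G i)) := by
  rw [funext (krausOp_eq_kronN hp0 hp1), krausSandwich_kronN]

lemma krausSandwich_krausOp_one (hp0 : 0 ≤ p) (hp1 : p ≤ 1) :
    krausSandwich (krausOp N p) 1 = 1 := by
  rw [← kronN_one, krausSandwich_krausOp_kronN hp0 hp1,
    krausSandwich_dephasingKraus_one hp0 hp1]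

lemma krausSandwich_krausOp_pauliAt_pauliX (hp0 : 0 ≤ p) (hp1 : p ≤ 1) (m : Fin N) :
    krausSandwich (krausOp N p) (pauliAt N m pauliX)
      = ((2 * √(p * (1 - p)) : ℝ) : ℂ) • pauliAt N m pauliZ := by
  have hsite : ∀ i, krausSandwich (dephasingKraus p) (if i = m then pauliX else 1)
      = (if i = m then ((2 * √(p * (1 - p)) : ℝ) : ℂ) else 1) • (if i = m then pauliZ else 1) := by
    intro i
    split_ifs
    · exact krausSandwich_dephasingKraus_pauliX hp0
    · rw [krausSandwich_dephasingKraus_one hp0 hp1, one_smul]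
  rw [pauliAt_eq_kronN, pauliAt_eq_kronN, krausSandwich_krausOp_kronN hp0 hp1, funext hsite,
    kronN_smul, Finset.prod_ite_eq' Finset.univ m, if_pos (Finset.mem_univ m)]

lemma krausSandwich_krausOp_pauliAt_mul_pauliAt (hp0 : 0 ≤ p) (hp1 : p ≤ 1) (m m' : Fin N) :
    krausSandwich (krausOp N p) (pauliAt N m pauliX * pauliAt N m' pauliX)
      = ((2 * √(p * (1 - p)) : ℝ) : ℂ) ^ 2 • (pauliAt N m pauliZ * pauliAt N m' pauliZ)
        + if m = m' then (1 - ((2 * √(p * (1 - p)) : ℝ) : ℂ) ^ 2) • 1 else 0 := by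
  rcases eq_or_ne m m' with rfl | hne
  · rw [pauliAt_mul_self pauliX_mul_self, pauliAt_mul_self pauliZ_mul_self,
      krausSandwich_krausOp_one hp0 hp1, if_pos rfl, ← add_smul, add_sub_cancel, one_smul]
  · have hmul : krausSandwich (krausOp N p) (pauliAt N m pauliX * pauliAt N m' pauliX)
        = krausSandwich (krausOp N p) (pauliAt N m pauliX)
          * krausSandwich (krausOp N p) (pauliAt N m' pauliX) := by
      simp only [pauliAt_eq_kronN, kronN_mul, krausSandwich_krausOp_kronN hp0 hp1]
      congr 1
      funext i
      by_cases him : i = m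
      · simp [him, hne, krausSandwich_dephasingKraus_one hp0 hp1]
      · simp [him, krausSandwich_dephasingKraus_one hp0 hp1]
    rw [hmul, krausSandwich_krausOp_pauliAt_pauliX hp0 hp1,
      krausSandwich_krausOp_pauliAt_pauliX hp0 hp1, smul_mul_smul_comm, if_neg hne, add_zero, sq]

lemma krausSandwich_krausOp_sum_pauliX (hp0 : 0 ≤ p) (hp1 : p ≤ 1) :
    krausSandwich (krausOp N p) (∑ m : Fin N, pauliAt N m pauliX)
      = ((2 * √(p * (1 - p)) : ℝ) : ℂ) • ∑ m : Fin N, pauliAt N m pauliZ := by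
  simp only [map_sum, krausSandwich_krausOp_pauliAt_pauliX hp0 hp1, Finset.smul_sum]

lemma krausSandwich_krausOp_sum_pauliX_mul_self (hp0 : 0 ≤ p) (hp1 : p ≤ 1) :
    krausSandwich (krausOp N p)
        ((∑ m : Fin N, pauliAt N m pauliX) * ∑ m : Fin N, pauliAt N m pauliX)
      = ((N : ℂ) * (1 - ((2 * √(p * (1 - p)) : ℝ) : ℂ) ^ 2)) • 1
        + ((2 * √(p * (1 - p)) : ℝ) : ℂ) ^ 2
          • ((∑ m : Fin N, pauliAt N m pauliZ) * ∑ m : Fin N, pauliAt N m pauliZ) := by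
  simp only [Finset.sum_mul_sum, map_sum, krausSandwich_krausOp_pauliAt_mul_pauliAt hp0 hp1,
    Finset.sum_add_distrib, Finset.sum_ite_eq, Finset.mem_univ, if_true, Finset.sum_const,
    Finset.card_univ, Fintype.card_fin, Finset.smul_sum, mul_smul, Nat.cast_smul_eq_nsmul]
  exact add_comm _ _

end Dephasing

lemma isLeast_range_quadratic {a b c : ℝ} (ha : 0 < a) :
    IsLeast (Set.range fun x : ℝ => c + 2 * b * x + a * x ^ 2) (c - b ^ 2 / a) := by
  refine ⟨⟨-b / a, by field_simp; ring⟩, ?_⟩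
  rintro _ ⟨x, rfl⟩
  have hsq : 0 ≤ (a * x + b) ^ 2 / a := by positivity
  have hexp : (a * x + b) ^ 2 / a = a * x ^ 2 + 2 * b * x + b ^ 2 / a := by field_simp; ring
  linarith

lemma isLeast_range_re_quadratic {N : ℕ} {q : ℝ} {v : ℂ} (hq0 : q ≠ 0) (hq1 : q ^ 2 ≤ 1)
    (hv : 0 < v.re) :
    IsLeast (Set.range fun α : ℝ =>
        (4 * (v + 2 * (α : ℂ) * (q * v) + (α : ℂ) ^ 2 * (N * (1 - (q : ℂ) ^ 2) + q ^ 2 * v))).re)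
      (4 * (N : ℝ) * v.re * (1 - q ^ 2) / ((N : ℝ) * (1 - q ^ 2) + q ^ 2 * v.re)) := by
  have hD : 0 < (N : ℝ) * (1 - q ^ 2) + q ^ 2 * v.re :=
    add_pos_of_nonneg_of_pos (mul_nonneg N.cast_nonneg (sub_nonneg.2 hq1)) (by positivity)
  convert isLeast_range_quadratic (c := 4 * v.re) (b := 4 * q * v.re)
    (mul_pos four_pos hD) using 2
  · funext α
    have hcpx : 4 * (v + 2 * (α : ℂ) * (q * v) + (α : ℂ) ^ 2 * (N * (1 - (q : ℂ) ^ 2) + q ^ 2 * v))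
        = ((4 + 8 * α * q + 4 * α ^ 2 * q ^ 2 : ℝ) : ℂ) * v
          + ((4 * α ^ 2 * (N * (1 - q ^ 2)) : ℝ) : ℂ) := by
      push_cast; ring
    rw [hcpx, Complex.add_re, Complex.re_ofReal_mul, Complex.ofReal_re]
    ring
  · rw [eq_sub_iff_add_eq, div_add_div _ _ hD.ne' (by positivity), div_eq_iff (by positivity)]
    ring

theorem escher_bound_local_dephasing_general
    (N : ℕ) (p : ℝ) (hp0 : 0 < p) (hp1 : p < 1)
    (q : ℝ) (hq : q = 2 * Real.sqrt (p * (1 - p)))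
    (Sx Sz M M₂ : Matrix (Fin N → Fin 2) (Fin N → Fin 2) ℂ)
    (hSx : Sx = ∑ i : Fin N, pauliAt N i.1 pauliX)
    (hSz : Sz = ∑ i : Fin N, pauliAt N i.1 pauliZ)
    (hM : M = ∑ l : Fin N → Fin 2, ∑ k : Fin N → Fin 2,
      (Sx l k) • (krausOp N p l * krausOp N p k))
    (hM₂ : M₂ = ∑ l : Fin N → Fin 2, ∑ k : Fin N → Fin 2,
      ((Sx * Sx) l k) • (krausOp N p l * krausOp N p k))
    (ψ : (Fin N → Fin 2) → ℂ) (hψ : star ψ ⬝ᵥ ψ = 1)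
    (v Ξ Ω : ℂ)
    (hv : v = star ψ ⬝ᵥ (Sz * Sz).mulVec ψ - (star ψ ⬝ᵥ Sz.mulVec ψ) ^ 2)
    (hΞ : Ξ = star ψ ⬝ᵥ (Sz * M).mulVec ψ -
      (star ψ ⬝ᵥ Sz.mulVec ψ) * (star ψ ⬝ᵥ M.mulVec ψ))
    (hΩ : Ω = star ψ ⬝ᵥ M₂.mulVec ψ - (star ψ ⬝ᵥ M.mulVec ψ) ^ 2) :
    Ξ = (q : ℂ) * v ∧
    Ω = (N : ℂ) * (1 - (q : ℂ) ^ 2) + (q : ℂ) ^ 2 * v ∧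
    (0 < v.re →
      IsLeast (Set.range fun α : ℝ =>
          (4 * (v + 2 * (α : ℂ) * Ξ + (α : ℂ) ^ 2 * Ω)).re)
        (4 * (N : ℝ) * v.re * (1 - q ^ 2) / ((N : ℝ) * (1 - q ^ 2) + q ^ 2 * v.re))) := by
  rw [← krausSandwich_apply] at hM hM₂
  have hMSz : M = (q : ℂ) • Sz := by
    rw [hM, hSx, krausSandwich_krausOp_sum_pauliX hp0.le hp1.le, ← hSz, hq]
  have hM₂Sz : M₂ = ((N : ℂ) * (1 - (q : ℂ) ^ 2)) • 1 + (q : ℂ) ^ 2 • (Sz * Sz) := by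
    rw [hM₂, hSx, krausSandwich_krausOp_sum_pauliX_mul_self hp0.le hp1.le, ← hSz, hq]
  have hΞq : Ξ = q * v := by
    rw [hΞ, hv, hMSz]
    simp only [Matrix.mul_smul, smul_mulVec, dotProduct_smul, smul_eq_mul]
    ring
  have hΩq : Ω = N * (1 - (q : ℂ) ^ 2) + q ^ 2 * v := by
    rw [hΩ, hv, hM₂Sz, hMSz]
    simp only [add_mulVec, smul_mulVec, one_mulVec, dotProduct_add, dotProduct_smul, hψ,
      smul_eq_mul]
    ring
  refine ⟨hΞq, hΩq, fun hv0 => ?_⟩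
  have hp : 0 < p * (1 - p) := mul_pos hp0 (sub_pos.2 hp1)
  have hq0 : q ≠ 0 := by rw [hq]; exact mul_ne_zero two_ne_zero (Real.sqrt_pos.2 hp).ne'
  have hq1 : q ^ 2 ≤ 1 := by
    rw [hq, mul_pow, Real.sq_sqrt hp.le]
    nlinarith [sq_nonneg (2 * p - 1)]
  rw [hΞq, hΩq]
  exact isLeast_range_re_quadratic hq0 hq1 hv0

/-- With `q = 2√(p(1-p))`, `M = Σ_{l,k} S_l ⟨l|S_x|k⟩ S_k`,
`M₂ = Σ_{l,k} S_l ⟨l|S_x²|k⟩ S_k`, and for a unit vector `ψ` the quantities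
`v = ⟨S_z²⟩ - ⟨S_z⟩²`, `Ξ = ⟨S_z M⟩ - ⟨S_z⟩⟨M⟩`, `Ω = ⟨M₂⟩ - ⟨M⟩²`, one has `Ξ = q v`,
`Ω = N(1-q²) + q² v`, and if `v > 0` the minimum over `α ∈ ℝ` of `4(v + 2αΞ + α²Ω)`
equals `4 N v (1-q²) / (N(1-q²) + q² v)`. -/
theorem escher_bound_local_dephasing
    (N : ℕ) (hN : 1 ≤ N) (p : ℝ) (hp0 : 0 < p) (hp1 : p < 1)
    (q : ℝ) (hq : q = 2 * Real.sqrt (p * (1 - p)))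
    (Sx Sz M M₂ : Matrix (Fin N → Fin 2) (Fin N → Fin 2) ℂ)
    (hSx : Sx = ∑ i : Fin N, pauliAt N i.1 pauliX)
    (hSz : Sz = ∑ i : Fin N, pauliAt N i.1 pauliZ)
    (hM : M = ∑ l : Fin N → Fin 2, ∑ k : Fin N → Fin 2,
      (Sx l k) • (krausOp N p l * krausOp N p k))
    (hM₂ : M₂ = ∑ l : Fin N → Fin 2, ∑ k : Fin N → Fin 2,
      ((Sx * Sx) l k) • (krausOp N p l * krausOp N p k))
    (ψ : (Fin N → Fin 2) → ℂ) (hψ : star ψ ⬝ᵥ ψ = 1)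
    (v Ξ Ω : ℂ)
    (hv : v = star ψ ⬝ᵥ (Sz * Sz).mulVec ψ - (star ψ ⬝ᵥ Sz.mulVec ψ) ^ 2)
    (hΞ : Ξ = star ψ ⬝ᵥ (Sz * M).mulVec ψ -
      (star ψ ⬝ᵥ Sz.mulVec ψ) * (star ψ ⬝ᵥ M.mulVec ψ))
    (hΩ : Ω = star ψ ⬝ᵥ M₂.mulVec ψ - (star ψ ⬝ᵥ M.mulVec ψ) ^ 2) :
    Ξ = (q : ℂ) * v ∧
    Ω = (N : ℂ) * (1 - (q : ℂ) ^ 2) + (q : ℂ) ^ 2 * v ∧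
    (0 < v.re →
      IsLeast (Set.range fun α : ℝ =>
          (4 * (v + 2 * (α : ℂ) * Ξ + (α : ℂ) ^ 2 * Ω)).re)
        (4 * (N : ℝ) * v.re * (1 - q ^ 2) / ((N : ℝ) * (1 - q ^ 2) + q ^ 2 * v.re))) :=
  escher_bound_local_dephasing_general N p hp0 hp1 q hq Sx Sz M M₂ hSx hSz hM hM₂ ψ hψ v Ξ Ω hv hΞ
    hΩ
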